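/- arXiv:0907.3438 — 2 statements merged into one kernel-verified Lean document; each statement's English description precedes it below -/
import Mathlib

section
/- Suppose Z ≠ {0}. Then the Brezzi coercivity constant α := inf over u ∈ Z with u ≠ 0 of sup over v ∈ Z with v ≠ 0 of a(u,v)/(‖u‖·‖v‖) equals min{ |λ| : λ ∈ ℝ and there exists u ∈ Z with u ≠ 0 such that a(u,v) = λ⟨u,v⟩ for all v ∈ Z }; in particular this set of eigenvalues is nonempty and the minimum is attained. -/
/-!
By the Riesz representation theorem the restriction of `a` to `Z` is `a(u,v) = ⟪T u, v⟫` for a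
symmetric operator `T` on `Z`, whose eigenpairs are exactly those of the variational eigenvalue
problem. By Cauchy–Schwarz the inner supremum equals `‖T u‖ / ‖u‖` (attained at `v = T u`).
Expanding `u` in an orthonormal eigenbasis of `T` gives `‖T u‖ ≥ min |λ| · ‖u‖`, with equality
at an eigenvector of an eigenvalue of smallest modulus.
-/

open InnerProductSpace Module RealInnerProductSpace

def LinearMap.leftKer {R M N P : Type*} [CommSemiring R] [AddCommMonoid M] [AddCommMonoid N]
    [AddCommMonoid P] [Module R M] [Module R N] [Module R P] (b : M →ₗ[R] N →ₗ[R] P) :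
    Submodule R M where
  carrier := {u | ∀ q, b u q = 0}
  add_mem' hu hv q := by simp [hu q, hv q]
  zero_mem' q := by simp
  smul_mem' c u hu q := by simp [hu q]

section InnerProductSpace

variable {E : Type*} [NormedAddCommGroup E] [InnerProductSpace ℝ E]

theorem iSup_inner_div_mul_norm [Nontrivial E] (x : E) {c : ℝ} (hc : 0 < c) :
    ⨆ v : {v : E // v ≠ 0}, ⟪x, v⟫ / (c * ‖(v : E)‖) = ‖x‖ / c := by
  have bound (v : {v : E // v ≠ 0}) : ⟪x, v⟫ / (c * ‖(v : E)‖) ≤ ‖x‖ / c := by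
    rw [div_le_div_iff₀ (by have := norm_pos_iff.2 v.2; positivity) hc]
    nlinarith [real_inner_le_norm x v]
  have : Nonempty {v : E // v ≠ 0} := nonempty_subtype.2 (exists_ne 0)
  refine le_antisymm (ciSup_le bound) ?_
  have hbdd : BddAbove (Set.range fun v : {v : E // v ≠ 0} => ⟪x, v⟫ / (c * ‖(v : E)‖)) :=
    ⟨_, Set.forall_mem_range.2 bound⟩
  rcases eq_or_ne x 0 with rfl | hx
  · simp
  · refine le_of_eq_of_le ?_ (le_ciSup hbdd ⟨x, hx⟩)
    rw [real_inner_self_eq_norm_mul_norm, mul_comm c,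
      mul_div_mul_left _ _ (norm_ne_zero_iff.2 hx)]

variable [FiniteDimensional ℝ E]

noncomputable def linearMapOfBilin (B : E →ₗ[ℝ] E →ₗ[ℝ] ℝ) : E →ₗ[ℝ] E where
  toFun u := (toDual ℝ E).symm (LinearMap.toContinuousLinearMap (B u))
  map_add' u v := by simp only [map_add]
  map_smul' c u := by simp [map_smul]

theorem inner_linearMapOfBilin (B : E →ₗ[ℝ] E →ₗ[ℝ] ℝ) (u v : E) :
    ⟪linearMapOfBilin B u, v⟫ = B u v := by
  simp [linearMapOfBilin, toDual_symm_apply]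

theorem isSymmetric_linearMapOfBilin {B : E →ₗ[ℝ] E →ₗ[ℝ] ℝ} (hB : ∀ u v, B u v = B v u) :
    (linearMapOfBilin B).IsSymmetric := fun u v => by
  rw [inner_linearMapOfBilin, hB, real_inner_comm, inner_linearMapOfBilin]

theorem linearMapOfBilin_eq_smul_iff (B : E →ₗ[ℝ] E →ₗ[ℝ] ℝ) (μ : ℝ) (u : E) :
    linearMapOfBilin B u = μ • u ↔ ∀ v, B u v = μ * ⟪u, v⟫ := by
  simp only [ext_iff_inner_right ℝ (x := linearMapOfBilin B u), inner_linearMapOfBilin,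
    real_inner_smul_left]

theorem LinearMap.IsSymmetric.exists_eigenvector_abs_mul_norm_le [Nontrivial E]
    {T : E →ₗ[ℝ] E} (hT : T.IsSymmetric) :
    ∃ μ : ℝ, ∃ x : E, x ≠ 0 ∧ T x = μ • x ∧ ∀ u, |μ| * ‖u‖ ≤ ‖T u‖ := by
  have : Nonempty (Fin (finrank ℝ E)) := ⟨⟨0, finrank_pos⟩⟩
  set b := hT.eigenvectorBasis rfl
  set lam := hT.eigenvalues rfl
  obtain ⟨i₀, -, hi₀⟩ := Finset.univ.exists_min_image (fun i => |lam i|) Finset.univ_nonempty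
  refine ⟨lam i₀, b i₀, b.orthonormal.ne_zero i₀, hT.apply_eigenvectorBasis rfl i₀, fun u => ?_⟩
  have inner_apply (i) : ⟪b i, T u⟫ = lam i * ⟪b i, u⟫ := by
    rw [← hT, hT.apply_eigenvectorBasis, real_inner_smul_left]; rfl
  refine (pow_le_pow_iff_left₀ (by positivity) (norm_nonneg _) two_ne_zero).1 ?_
  rw [mul_pow, ← b.sum_sq_inner_right, ← b.sum_sq_inner_right, Finset.mul_sum]
  refine Finset.sum_le_sum fun i _ => ?_
  rw [inner_apply, mul_pow, sq_abs]
  exact mul_le_mul_of_nonneg_right (sq_le_sq.2 (hi₀ i (Finset.mem_univ i))) (sq_nonneg _)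

theorem LinearMap.IsSymmetric.isLeast_abs_eigenvalue [Nontrivial E]
    {T : E →ₗ[ℝ] E} (hT : T.IsSymmetric) :
    IsLeast {r : ℝ | ∃ μ : ℝ, r = |μ| ∧ ∃ u : E, u ≠ 0 ∧ T u = μ • u}
      (⨅ u : {u : E // u ≠ 0}, ‖T u‖ / ‖(u : E)‖) := by
  obtain ⟨μ₀, x, hx, hTx, hbound⟩ := hT.exists_eigenvector_abs_mul_norm_le
  have le_ratio (u : {u : E // u ≠ 0}) : |μ₀| ≤ ‖T u‖ / ‖(u : E)‖ :=
    (le_div_iff₀ (norm_pos_iff.2 u.2)).2 (hbound u)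
  have ratio_x : ‖T x‖ / ‖x‖ = |μ₀| := by
    rw [hTx, norm_smul, Real.norm_eq_abs, mul_div_cancel_right₀ _ (norm_ne_zero_iff.2 hx)]
  have : Nonempty {u : E // u ≠ 0} := ⟨⟨x, hx⟩⟩
  have hinf : (⨅ u : {u : E // u ≠ 0}, ‖T u‖ / ‖(u : E)‖) = |μ₀| :=
    le_antisymm (ratio_x ▸ ciInf_le ⟨|μ₀|, Set.forall_mem_range.2 le_ratio⟩ ⟨x, hx⟩)
      (le_ciInf le_ratio)
  rw [hinf]
  refine ⟨⟨μ₀, rfl, x, hx, hTx⟩, ?_⟩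
  rintro _ ⟨μ, rfl, u, hu, hTu⟩
  have := hbound u
  rw [hTu, norm_smul, Real.norm_eq_abs] at this
  exact le_of_mul_le_mul_right this (norm_pos_iff.2 hu)

theorem isLeast_abs_eigenvalue_iInf_iSup [Nontrivial E] {a : E →ₗ[ℝ] E →ₗ[ℝ] ℝ}
    (ha : ∀ u v, a u v = a v u) :
    IsLeast {r : ℝ | ∃ μ : ℝ, r = |μ| ∧ ∃ u : E, u ≠ 0 ∧ ∀ v, a u v = μ * ⟪u, v⟫}
      (⨅ u : {u : E // u ≠ 0}, ⨆ v : {v : E // v ≠ 0}, a u v / (‖(u : E)‖ * ‖(v : E)‖)) := by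
  have hsup (u : {u : E // u ≠ 0}) : ⨆ v : {v : E // v ≠ 0}, a u v / (‖(u : E)‖ * ‖(v : E)‖) =
      ‖linearMapOfBilin a u‖ / ‖(u : E)‖ := by
    simp_rw [← inner_linearMapOfBilin a]
    exact iSup_inner_div_mul_norm _ (norm_pos_iff.2 u.2)
  simpa only [hsup, linearMapOfBilin_eq_smul_iff] using
    (isSymmetric_linearMapOfBilin ha).isLeast_abs_eigenvalue

theorem isLeast_abs_eigenvalue_iInf_iSup_of_submodule {Z : Submodule ℝ E} (hZ : Z ≠ ⊥)
    {a : E →ₗ[ℝ] E →ₗ[ℝ] ℝ} (ha : ∀ u ∈ Z, ∀ v ∈ Z, a u v = a v u) :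
    IsLeast {r : ℝ | ∃ μ : ℝ, r = |μ| ∧ ∃ u : E, u ≠ 0 ∧ u ∈ Z ∧ ∀ v ∈ Z, a u v = μ * ⟪u, v⟫}
      (⨅ u : {u : E // u ∈ Z ∧ u ≠ 0}, ⨆ v : {v : E // v ∈ Z ∧ v ≠ 0},
        a u.1 v.1 / (‖u.1‖ * ‖v.1‖)) := by
  have : Nontrivial Z := Submodule.nontrivial_iff_ne_bot.2 hZ
  let e : {z : Z // z ≠ 0} ≃ {u : E // u ∈ Z ∧ u ≠ 0} :=
    (Equiv.subtypeEquivRight fun _ => Submodule.coe_eq_zero.not.symm).trans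
      (Equiv.subtypeSubtypeEquivSubtypeInter (· ∈ Z) (· ≠ 0))
  rw [← e.iInf_comp]
  simp_rw [← e.iSup_comp]
  convert isLeast_abs_eigenvalue_iInf_iSup (a := a.compl₁₂ Z.subtype Z.subtype)
    (fun u v => ha u u.2 v v.2) using 1
  · ext r
    simp
  · rfl

end InnerProductSpace

theorem brezzi_coercivity_eq_min_abs_eigenvalue_general
    {V : Type*} [NormedAddCommGroup V] [InnerProductSpace ℝ V]
    [FiniteDimensional ℝ V]
    {Q : Type*} [NormedAddCommGroup Q] [InnerProductSpace ℝ Q]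
    (a : V →ₗ[ℝ] V →ₗ[ℝ] ℝ) (ha : ∀ u v, a u v = a v u)
    (b : V →ₗ[ℝ] Q →ₗ[ℝ] ℝ)
    (hZ : ∃ u : V, u ≠ 0 ∧ ∀ q : Q, b u q = 0) :
    IsLeast
      { r : ℝ | ∃ μ : ℝ, r = |μ| ∧ ∃ u : V, u ≠ 0 ∧ (∀ q : Q, b u q = 0) ∧
          ∀ v : V, (∀ q : Q, b v q = 0) → a u v = μ * (inner ℝ u v : ℝ) }
      (⨅ u : {u : V // (∀ q : Q, b u q = 0) ∧ u ≠ 0},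
        ⨆ v : {v : V // (∀ q : Q, b v q = 0) ∧ v ≠ 0},
          a u.1 v.1 / (‖u.1‖ * ‖v.1‖)) := by
  obtain ⟨u, hu, hbu⟩ := hZ
  -- `u ∈ b.leftKer` unfolds to `∀ q, b u q = 0`, so this is the submodule version verbatim.
  exact isLeast_abs_eigenvalue_iInf_iSup_of_submodule (Z := b.leftKer)
    ((Submodule.ne_bot_iff _).2 ⟨u, hbu, hu⟩) fun u _ v _ => ha u v

/-- If `Z = {u | b(u,q) = 0 ∀ q} ≠ {0}`, the Brezzi coercivity constant `α`
equals the minimum of `|λ|` over eigenvalues `λ` of the eigenvalue problem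
`a(u,v) = λ⟨u,v⟩` on `Z`; in particular this eigenvalue set is nonempty and the
minimum is attained. -/
theorem brezzi_coercivity_eq_min_abs_eigenvalue
    {V : Type*} [NormedAddCommGroup V] [InnerProductSpace ℝ V]
    [FiniteDimensional ℝ V] [Nontrivial V]
    {Q : Type*} [NormedAddCommGroup Q] [InnerProductSpace ℝ Q]
    [FiniteDimensional ℝ Q] [Nontrivial Q]
    (a : V →ₗ[ℝ] V →ₗ[ℝ] ℝ) (ha : ∀ u v, a u v = a v u)
    (b : V →ₗ[ℝ] Q →ₗ[ℝ] ℝ)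
    (hZ : ∃ u : V, u ≠ 0 ∧ ∀ q : Q, b u q = 0) :
    IsLeast
      { r : ℝ | ∃ μ : ℝ, r = |μ| ∧ ∃ u : V, u ≠ 0 ∧ (∀ q : Q, b u q = 0) ∧
          ∀ v : V, (∀ q : Q, b v q = 0) → a u v = μ * (inner ℝ u v : ℝ) }
      (⨅ u : {u : V // (∀ q : Q, b u q = 0) ∧ u ≠ 0},
        ⨆ v : {v : V // (∀ q : Q, b v q = 0) ∧ v ≠ 0},
          a u.1 v.1 / (‖u.1‖ * ‖v.1‖)) :=
  brezzi_coercivity_eq_min_abs_eigenvalue_general a ha b hZ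
end

section
/- If (λ̂,(û,p̂)) is an eigenpair of Eigenproblem (II), then λ̂ p̂ = -dû in Q, and exactly one of the following holds: either λ̂ = 0, û = 0 and ⟨p̂, dv⟩ = 0 for all v ∈ V; or λ̂ > 0, û ≠ 0 and ⟨dû, dv⟩ = λ̂⟨û, v⟩ for all v ∈ V. -/
/-!
Testing the eigen-equation with `v = 0` gives `⟨dû + λ̂p̂, q⟩ = 0` for every `q`, hence
`dû = -λ̂p̂`; testing with `q = 0` gives `⟨û, v⟩ = -⟨dv, p̂⟩`. Substituting one into the other yields
`⟨dû, dv⟩ = λ̂⟨û, v⟩` and, for `v = û`, `‖û‖² = λ̂‖p̂‖²`. So `û = 0` forces `λ̂ = 0` (as then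
`p̂ ≠ 0`), while `û ≠ 0` forces `λ̂ > 0`.
-/

open scoped RealInnerProductSpace

def SolvesEigenproblemII {V Q : Type*} [NormedAddCommGroup V] [InnerProductSpace ℝ V]
    [NormedAddCommGroup Q] [InnerProductSpace ℝ Q] (d : V →ₗ[ℝ] Q) (ν : ℝ) (u : V) (p : Q) :
    Prop :=
  ∀ (v : V) (q : Q), ⟪u, v⟫ + ⟪d v, p⟫ + ⟪d u, q⟫ = -ν * ⟪p, q⟫

namespace SolvesEigenproblemII

variable {V Q : Type*} [NormedAddCommGroup V] [InnerProductSpace ℝ V]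
  [NormedAddCommGroup Q] [InnerProductSpace ℝ Q] {d : V →ₗ[ℝ] Q} {ν : ℝ} {u : V} {p : Q}

theorem smul_eq_neg (h : SolvesEigenproblemII d ν u p) : ν • p = -d u :=
  ext_inner_right ℝ fun q => by
    have hq := h 0 q
    simp only [map_zero, inner_zero_left, inner_zero_right, add_zero, zero_add] at hq
    rw [real_inner_smul_left, inner_neg_left, hq, neg_mul, neg_neg]

theorem inner_add_inner_eq_zero (h : SolvesEigenproblemII d ν u p) (v : V) :
    ⟪u, v⟫ + ⟪d v, p⟫ = 0 := by
  simpa using h v 0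

theorem inner_map_map (h : SolvesEigenproblemII d ν u p) (v : V) :
    ⟪d u, d v⟫ = ν * ⟪u, v⟫ := by
  rw [← neg_neg (d u), ← h.smul_eq_neg, inner_neg_left, real_inner_smul_left, real_inner_comm]
  linear_combination -ν * h.inner_add_inner_eq_zero v

theorem inner_self_eq (h : SolvesEigenproblemII d ν u p) : ⟪u, u⟫ = ν * ⟪p, p⟫ := by
  have hu := h.inner_add_inner_eq_zero u
  rw [← neg_neg (d u), ← h.smul_eq_neg, inner_neg_left, real_inner_smul_left] at hu
  linarith

theorem inner_map_eq_zero_of_eq_zero (h : SolvesEigenproblemII d ν u p) (hu : u = 0) (v : V) :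
    ⟪p, d v⟫ = 0 := by
  simpa [hu, real_inner_comm] using h.inner_add_inner_eq_zero v

theorem eq_zero_of_eq_zero (h : SolvesEigenproblemII d ν u p) (hup : (u, p) ≠ 0) (hu : u = 0) :
    ν = 0 := by
  have hp : p ≠ 0 := fun hp => hup (by simp [hu, hp])
  have hν := h.inner_self_eq
  rw [hu, inner_zero_left, real_inner_self_eq_norm_sq] at hν
  exact (mul_eq_zero.mp hν.symm).resolve_right (by positivity)

theorem pos_of_ne_zero (h : SolvesEigenproblemII d ν u p) (hu : u ≠ 0) : 0 < ν := by
  have hν := h.inner_self_eq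
  rw [real_inner_self_eq_norm_sq, real_inner_self_eq_norm_sq] at hν
  exact pos_of_mul_pos_left (hν ▸ by positivity) (sq_nonneg ‖p‖)

end SolvesEigenproblemII

/-- If `(λ̂,(û,p̂))` is an eigenpair of Eigenproblem (II)
`⟨û,v⟩ + ⟨dv,p̂⟩ + ⟨dû,q⟩ = -λ̂⟨p̂,q⟩`, then `λ̂p̂ = -dû` in `Q`, and exactly one of
the following holds: either `λ̂ = 0`, `û = 0` and `⟨p̂,dv⟩ = 0` for all `v`, or
`λ̂ > 0`, `û ≠ 0` and `⟨dû,dv⟩ = λ̂⟨û,v⟩` for all `v`. -/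
theorem eigenproblemII_dichotomy
    {V : Type*} [NormedAddCommGroup V] [InnerProductSpace ℝ V]
    {Q : Type*} [NormedAddCommGroup Q] [InnerProductSpace ℝ Q]
    (d : V →ₗ[ℝ] Q) (ν : ℝ) (u : V) (p : Q) (h0 : (u, p) ≠ (0 : V × Q))
    (heig : ∀ (v : V) (q : Q),
      (inner ℝ u v : ℝ) + (inner ℝ (d v) p : ℝ) + (inner ℝ (d u) q : ℝ)
        = -ν * (inner ℝ p q : ℝ)) :
    ν • p = -d u ∧
    Xor' (ν = 0 ∧ u = 0 ∧ ∀ v : V, (inner ℝ p (d v) : ℝ) = 0)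
         (0 < ν ∧ u ≠ 0 ∧ ∀ v : V, (inner ℝ (d u) (d v) : ℝ) = ν * (inner ℝ u v : ℝ)) := by
  have h : SolvesEigenproblemII d ν u p := heig
  refine ⟨h.smul_eq_neg, ?_⟩
  by_cases hu : u = 0
  · exact Or.inl ⟨⟨h.eq_zero_of_eq_zero h0 hu, hu, h.inner_map_eq_zero_of_eq_zero hu⟩,
      fun ⟨_, hu', _⟩ => hu' hu⟩
  · exact Or.inr ⟨⟨h.pos_of_ne_zero hu, hu, h.inner_map_map⟩, fun ⟨_, hu', _⟩ => hu hu'⟩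
end
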